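/- If the initial velocity of a solution (γ, b) of the conformal circle system is non-null, then γ'(τ) is non-null for all τ in the domain; indeed ⟨γ',γ'⟩ is either identically zero on a connected domain or never zero, since d/dτ ⟨γ',γ'⟩ = 2⟨∇_{γ'}γ', γ'⟩ = −2 b(γ')·⟨γ',γ'⟩ along solutions. -/

import Mathlib

/-!
Write `v = γ'` and `Q = ⟨v, v⟩_g`. Contracting the conformal circle tensor gives the acceleration
`v' = -(2 b(v) v - Q g⁻¹b)`, and pairing it with `g v` (using `g` symmetric and `g g⁻¹ = 1`) gives
`Q' = -2 b(v) Q`. With `b` continuous this linear scalar ODE integrates to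
`Q(τ) = Q(0) exp(-2 ∫₀^τ b(v))`, which vanishes exactly when `Q(0)` does.
-/
open Matrix Finset Real

variable {ι : Type*} [Fintype ι]

lemma sum_sum_mul_mul_eq_dotProduct_mulVec (g : Matrix ι ι ℝ) (v w : ι → ℝ) :
    ∑ i, ∑ j, g i j * v i * w j = v ⬝ᵥ g *ᵥ w := by
  simp only [dotProduct, mulVec, mul_sum]
  exact sum_congr rfl fun i _ => sum_congr rfl fun j _ => by ring

lemma Matrix.IsSymm.dotProduct_mulVec_comm {g : Matrix ι ι ℝ} (hg : g.IsSymm) (v w : ι → ℝ) :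
    v ⬝ᵥ g *ᵥ w = w ⬝ᵥ g *ᵥ v := by
  rw [dotProduct_mulVec, ← mulVec_transpose, hg.eq, dotProduct_comm]

lemma hasDerivAt_sum_sum_mul_mul {g : Matrix ι ι ℝ} (hg : g.IsSymm) {v : ℝ → ι → ℝ}
    {a : ι → ℝ} {t : ℝ} (hv : ∀ i, HasDerivAt (fun s => v s i) (a i) t) :
    HasDerivAt (fun s => ∑ i, ∑ j, g i j * v s i * v s j) (2 * (a ⬝ᵥ g *ᵥ v t)) t := by
  have h := HasDerivAt.fun_sum (u := univ) fun i _ => HasDerivAt.fun_sum (u := univ) fun j _ =>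
    ((hv i).const_mul (g i j)).fun_mul (hv j)
  refine h.congr_deriv ?_
  simp only [sum_add_distrib, sum_sum_mul_mul_eq_dotProduct_mulVec,
    hg.dotProduct_mulVec_comm (v t)]
  ring

lemma sum_conformal_contraction [DecidableEq ι] (g ginv : Matrix ι ι ℝ) (b v : ι → ℝ) (i : ι) :
    ∑ j, ∑ k, ∑ l, ((if j = i then (1:ℝ) else 0) * (if k = l then (1:ℝ) else 0)
        + (if j = l then (1:ℝ) else 0) * (if k = i then (1:ℝ) else 0)
        - g j k * ginv i l) * b l * v j * v k
      = 2 * (b ⬝ᵥ v) * v i - (v ⬝ᵥ g *ᵥ v) * (ginv *ᵥ b) i := by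
  simp only [add_mul, sub_mul, sum_add_distrib, sum_sub_distrib, ite_mul, one_mul, zero_mul,
    sum_ite_irrel, sum_const_zero, sum_ite_eq, sum_ite_eq', mem_univ, if_true]
  rw [← sum_sum_mul_mul_eq_dotProduct_mulVec g v v, ← sum_add_distrib]
  simp only [dotProduct, mulVec, sum_mul]
  simp only [mul_sum, sum_mul]
  congr 1
  · exact sum_congr rfl fun _ _ => by ring
  · exact sum_congr rfl fun _ _ => sum_congr rfl fun _ _ => sum_congr rfl fun _ _ => by ring

lemma Matrix.IsSymm.mulVec_dotProduct_mulVec_of_mul_eq_one [DecidableEq ι] {g ginv : Matrix ι ι ℝ}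
    (hg : g.IsSymm) (hinv : g * ginv = 1) (b v : ι → ℝ) : (ginv *ᵥ b) ⬝ᵥ g *ᵥ v = b ⬝ᵥ v := by
  rw [dotProduct_mulVec, vecMul_mulVec, ← hg.eq, ← transpose_mul, hinv, transpose_one, vecMul_one]

lemma dotProduct_conformal_accel [DecidableEq ι] {g ginv : Matrix ι ι ℝ} (hg : g.IsSymm)
    (hinv : g * ginv = 1) (b v : ι → ℝ) :
    ((2 * (b ⬝ᵥ v)) • v - (v ⬝ᵥ g *ᵥ v) • ginv *ᵥ b) ⬝ᵥ g *ᵥ v = (b ⬝ᵥ v) * (v ⬝ᵥ g *ᵥ v) := by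
  rw [sub_dotProduct, smul_dotProduct, smul_dotProduct,
    hg.mulVec_dotProduct_mulVec_of_mul_eq_one hinv, smul_eq_mul, smul_eq_mul]
  ring

lemma eq_mul_exp_integral_of_hasDerivAt {f a : ℝ → ℝ} (ha : Continuous a)
    (hf : ∀ t, HasDerivAt f (a t * f t) t) (t : ℝ) :
    f t = f 0 * exp (∫ s in (0:ℝ)..t, a s) := by
  set A := fun u => ∫ s in (0:ℝ)..u, a s
  have hA : ∀ u, HasDerivAt A (a u) u := fun u => (ha.integral_hasStrictDerivAt 0 u).hasDerivAt
  have hconst : ∀ u, HasDerivAt (fun u => f u * exp (-A u)) 0 u := fun u =>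
    ((hf u).mul ((hA u).neg.exp)).congr_deriv (by ring)
  have h := is_const_of_deriv_eq_zero (fun u => (hconst u).differentiableAt)
    (fun u => (hconst u).deriv) t 0
  simp only [A, intervalIntegral.integral_same, neg_zero, exp_zero, mul_one] at h
  rw [← h, mul_assoc, ← exp_add, neg_add_cancel, exp_zero, mul_one]

theorem stmt8 (n : ℕ)
    (g ginv : Matrix (Fin n) (Fin n) ℝ) (hgsymm : g.IsSymm) (hinv : g * ginv = 1)
    (S : Fin n → Fin n → Fin n → Fin n → ℝ)
    (hS : ∀ i j k l, S i j k l =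
      (if i = k then (1:ℝ) else 0) * (if j = l then (1:ℝ) else 0)
      + (if i = l then (1:ℝ) else 0) * (if j = k then (1:ℝ) else 0)
      - g i j * ginv k l)
    (γ : ℝ → Fin n → ℝ) (hsm : ContDiff ℝ (⊤ : ℕ∞) γ)
    (b : ℝ → Fin n → ℝ) (hbcont : Continuous b)
    (heq : ∀ (τ : ℝ) (i : Fin n),
      deriv (fun t => deriv (fun s => γ s i) t) τ
        = - ∑ j, ∑ k, ∑ l,
            S j k i l * b τ l * deriv (fun s => γ s j) τ * deriv (fun s => γ s k) τ)
    (hnonnull0 :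
      (∑ i, ∑ j, g i j * deriv (fun s => γ s i) 0 * deriv (fun s => γ s j) 0) ≠ 0) :
    ∀ τ : ℝ,
      (∑ i, ∑ j, g i j * deriv (fun s => γ s i) τ * deriv (fun s => γ s j) τ) ≠ 0 := by
  set v : ℝ → Fin n → ℝ := fun t i => deriv (fun s => γ s i) t
  have hv_diff : ∀ i, Differentiable ℝ (fun t => v t i) := fun i =>
    (contDiff_infty_iff_deriv.mp ((contDiff_apply ℝ ℝ i).comp hsm)).2.differentiable (by simp)
  have hv : ∀ t,
      HasDerivAt v (-((2 * (b t ⬝ᵥ v t)) • v t - (v t ⬝ᵥ g *ᵥ v t) • ginv *ᵥ b t)) t := by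
    intro t
    refine hasDerivAt_pi.mpr fun i => ?_
    have h := heq t i
    simp only [hS, sum_conformal_contraction] at h
    refine (hv_diff i t).hasDerivAt.congr_deriv ?_
    rw [h]
    simp [v]
  have hc : Continuous fun t => -(2 * (b t ⬝ᵥ v t)) :=
    (continuous_const.mul (hbcont.dotProduct (continuous_pi fun i => (hv_diff i).continuous))).neg
  have hQ : ∀ t, HasDerivAt (fun s => ∑ i, ∑ j, g i j * v s i * v s j)
      (-(2 * (b t ⬝ᵥ v t)) * ∑ i, ∑ j, g i j * v t i * v t j) t := fun t => by
    refine (hasDerivAt_sum_sum_mul_mul hgsymm (hasDerivAt_pi.mp (hv t))).congr_deriv ?_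
    rw [sum_sum_mul_mul_eq_dotProduct_mulVec, neg_dotProduct,
      dotProduct_conformal_accel hgsymm hinv]
    ring
  intro τ
  rw [eq_mul_exp_integral_of_hasDerivAt hc hQ τ]
  exact mul_ne_zero hnonnull0 (exp_pos _).ne'
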